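/- Let (N,v) be a TU-game and x a pre-imputation. If x fails Property I — that is, there exist ψ ∈ ℝ with D(ψ,x) ≠ ∅ and y ∈ ℝ^N with y(N) = 0, y(S) ≥ 0 for all S ∈ D(ψ,x), and y(S₀) > 0 for some S₀ ∈ D(ψ,x) — then x is not a lexicographic minimizer of θ over the pre-imputations: there exists a pre-imputation z with θ(z) <_L θ(x). -/

import Mathlib

open Finset

noncomputable def excess {α : Type*} (v : Finset α → ℝ) (x : α → ℝ) (S : Finset α) : ℝ :=
  v S - ∑ k ∈ S, x k

noncomputable def Dset {α : Type*} [Fintype α] [DecidableEq α]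
    (v : Finset α → ℝ) (x : α → ℝ) (ψ : ℝ) : Finset (Finset α) :=
  (Finset.univ.powerset.erase (∅ : Finset α)).filter (fun S => ψ ≤ excess v x S)

def indVec {α : Type*} [DecidableEq α] (S : Finset α) : α → ℝ := fun k => if k ∈ S then 1 else 0

def IsBalanced {α : Type*} [Fintype α] [DecidableEq α] (B : Finset (Finset α)) : Prop :=
  ∃ w : Finset α → ℝ, (∀ S ∈ B, 0 < w S) ∧ (∑ S ∈ B, w S • indVec S) = fun _ => (1:ℝ)

noncomputable def theta {α : Type*} [Fintype α] [DecidableEq α]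
    (v : Finset α → ℝ) (x : α → ℝ) : List ℝ :=
  List.insertionSort (· ≥ ·) (((Finset.univ.powerset.erase (∅ : Finset α)).toList).map (excess v x))

def lexLe (l₁ l₂ : List ℝ) : Prop := l₁ = l₂ ∨ List.Lex (· < ·) l₁ l₂

/-!
Move `x` to `z = x + δ • y`. The excess of a coalition `S` drops by `δ • y(S)`, so on `D(ψ,x)` no
excess increases and that of `S₀` strictly decreases. For small `δ > 0` the coalitions of `D(ψ,x)`
still carry the largest excesses, so `θ(x)` and `θ(z)` both begin with the sorted excesses on
`D(ψ,x)`. Sorting is monotone for the componentwise order, hence the block for `z` is componentwise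
below the block for `x`, and the two differ because their sums do; the first difference decides
the lexicographic comparison.
-/

open Filter Topology

namespace List

section LinearOrder

variable {β : Type*} [LinearOrder β]

theorem countP_le_countP_of_forall₂_le (c : β) {l₁ l₂ : List β} (h : Forall₂ (· ≤ ·) l₁ l₂) :
    l₁.countP (c ≤ ·) ≤ l₂.countP (c ≤ ·) := by
  induction h with
  | nil => simp
  | @cons a b _ _ hab _ ih =>
    simp only [countP_cons, decide_eq_true_eq]
    split_ifs with ha hb hb <;> first | omega | exact absurd (ha.trans hab) hb

theorem forall₂_le_of_countP_le : ∀ {l₁ l₂ : List β}, l₁.Pairwise (· ≥ ·) → l₂.Pairwise (· ≥ ·) →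
    l₁.length = l₂.length → (∀ c : β, l₁.countP (c ≤ ·) ≤ l₂.countP (c ≤ ·)) →
    Forall₂ (· ≤ ·) l₁ l₂
  | [], [], _, _, _, _ => .nil
  | a :: s, b :: t, hs, ht, hlen, hc => by
    have hab : a ≤ b := by
      obtain ⟨e, he, hae⟩ := countP_pos_iff.mp <|
        (show 0 < (a :: s).countP (a ≤ ·) by simp).trans_le (hc a)
      rcases mem_cons.mp he with rfl | he
      · simpa using hae
      · exact (of_decide_eq_true hae).trans (rel_of_pairwise_cons ht he)
    refine .cons hab (forall₂_le_of_countP_le hs.of_cons ht.of_cons (by simpa using hlen) fun c => ?_)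
    rcases le_or_gt c a with hca | hac
    · have := hc c
      simp only [countP_cons, hca, hca.trans hab, decide_true, if_true] at this
      omega
    · have : s.countP (c ≤ ·) = 0 :=
        countP_eq_zero.mpr fun e he => by simpa using (rel_of_pairwise_cons hs he).trans_lt hac
      simp [this]

theorem forall₂_le_insertionSort_map {γ : Type*} (f g : γ → β) (l : List γ)
    (h : ∀ a ∈ l, f a ≤ g a) :
    Forall₂ (· ≤ ·) ((l.map f).insertionSort (· ≥ ·)) ((l.map g).insertionSort (· ≥ ·)) := by
  have hf := perm_insertionSort (· ≥ ·) (l.map f)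
  have hg := perm_insertionSort (· ≥ ·) (l.map g)
  refine forall₂_le_of_countP_le (pairwise_insertionSort _ _) (pairwise_insertionSort _ _)
    (by simp [hf.length_eq, hg.length_eq]) fun c => ?_
  rw [hf.countP_eq, hg.countP_eq]
  exact countP_le_countP_of_forall₂_le c <| by
    simpa [forall₂_map_left_iff, forall₂_map_right_iff, forall₂_same] using h

end LinearOrder

theorem lex_append_of_forall₂_le_of_ne {β : Type*} [PartialOrder β] {s t : List β}
    (h : Forall₂ (· ≤ ·) s t) (hne : s ≠ t) (u w : List β) : Lex (· < ·) (s ++ u) (t ++ w) := by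
  induction h with
  | nil => exact absurd rfl hne
  | @cons a b s' t' hab _ ih =>
    rcases hab.eq_or_lt with rfl | hlt
    · exact .cons (ih fun he => hne (he ▸ rfl))
    · exact .rel hlt

end List

section TUGame

variable {α : Type*} (v : Finset α → ℝ)

theorem excess_add_smul (x y : α → ℝ) (δ : ℝ) (S : Finset α) :
    excess v (x + δ • y) S = excess v x S - δ * ∑ k ∈ S, y k := by
  simp only [excess, Pi.add_apply, Pi.smul_apply, smul_eq_mul, sum_add_distrib, ← mul_sum]
  ring

theorem eventually_excess_add_smul_lt (x y : α → ℝ) {S T : Finset α}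
    (h : excess v x T < excess v x S) :
    ∀ᶠ δ in 𝓝 (0 : ℝ), excess v (x + δ • y) T < excess v (x + δ • y) S := by
  simp only [excess_add_smul]
  exact ContinuousAt.eventually_lt (by fun_prop) (by fun_prop) (by simpa using h)

variable [Fintype α] [DecidableEq α]

theorem excess_lt_of_mem_Dset {x : α → ℝ} {ψ : ℝ} {S T : Finset α} (hS : S ∈ Dset v x ψ)
    (hT : T ∈ univ.powerset.erase ∅ \ Dset v x ψ) : excess v x T < excess v x S := by
  obtain ⟨hT, hTD⟩ := mem_sdiff.mp hT
  exact (not_le.mp fun h => hTD (mem_filter.mpr ⟨hT, h⟩)).trans_le (mem_filter.mp hS).2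

open List in
theorem theta_eq_append (w : α → ℝ) (D : Finset (Finset α))
    (hD : D ⊆ univ.powerset.erase ∅)
    (hsep : ∀ S ∈ D, ∀ T ∈ univ.powerset.erase ∅ \ D, excess v w T ≤ excess v w S) :
    theta v w = (D.toList.map (excess v w)).insertionSort (· ≥ ·) ++
      ((univ.powerset.erase ∅ \ D).toList.map (excess v w)).insertionSort (· ≥ ·) := by
  set A : Finset (Finset α) := univ.powerset.erase ∅
  have hA : (D.toList ++ (A \ D).toList).Perm A.toList := by
    rw [← Multiset.coe_eq_coe, ← Multiset.coe_add, coe_toList, coe_toList, coe_toList, sdiff_val,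
      add_tsub_cancel_of_le (val_le_iff.mpr hD)]
  refine (List.Perm.eq_of_pairwise' (r := (· ≥ ·)) ?_ (List.pairwise_insertionSort _ _) ?_).symm
  · rw [List.pairwise_append]
    refine ⟨List.pairwise_insertionSort _ _, List.pairwise_insertionSort _ _, fun a ha b hb => ?_⟩
    obtain ⟨S, hS, rfl⟩ := List.mem_map.mp (List.mem_insertionSort _ |>.mp ha)
    obtain ⟨T, hT, rfl⟩ := List.mem_map.mp (List.mem_insertionSort _ |>.mp hb)
    exact hsep S (mem_toList.mp hS) T (mem_toList.mp hT)
  · calc _ ~ D.toList.map (excess v w) ++ (A \ D).toList.map (excess v w) :=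
          (List.perm_insertionSort _ _).append (List.perm_insertionSort _ _)
      _ = (D.toList ++ (A \ D).toList).map (excess v w) := List.map_append.symm
      _ ~ A.toList.map (excess v w) := hA.map _
      _ ~ theta v w := (List.perm_insertionSort _ _).symm

theorem lex_theta_of_excess_le_on_top (x z : α → ℝ) (D : Finset (Finset α))
    (hD : D ⊆ univ.powerset.erase ∅)
    (hx : ∀ S ∈ D, ∀ T ∈ univ.powerset.erase ∅ \ D, excess v x T ≤ excess v x S)
    (hz : ∀ S ∈ D, ∀ T ∈ univ.powerset.erase ∅ \ D, excess v z T ≤ excess v z S)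
    (hle : ∀ S ∈ D, excess v z S ≤ excess v x S) (hlt : ∃ S ∈ D, excess v z S < excess v x S) :
    List.Lex (· < ·) (theta v z) (theta v x) := by
  rw [theta_eq_append v x D hD hx, theta_eq_append v z D hD hz]
  refine List.lex_append_of_forall₂_le_of_ne
    (List.forall₂_le_insertionSort_map _ _ _ fun S hS => hle S (mem_toList.mp hS)) ?_ _ _
  have hsum : ∑ S ∈ D, excess v z S < ∑ S ∈ D, excess v x S := sum_lt_sum hle hlt
  intro h
  rw [← sum_map_toList, ← sum_map_toList, ← (List.perm_insertionSort (· ≥ ·) _).sum_eq,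
    ← (List.perm_insertionSort (· ≥ ·) (D.toList.map (excess v x))).sum_eq, h] at hsum
  exact hsum.false

end TUGame

theorem stmt7_general {α : Type*} [Fintype α] [DecidableEq α]
    (v : Finset α → ℝ)
    (x : α → ℝ) (hx : ∑ k, x k = v Finset.univ)
    (ψ : ℝ)
    (y : α → ℝ) (hy : ∑ k, y k = 0)
    (hpos : ∀ S ∈ Dset v x ψ, 0 ≤ ∑ k ∈ S, y k)
    (S₀ : Finset α) (hS₀ : S₀ ∈ Dset v x ψ) (hS₀pos : 0 < ∑ k ∈ S₀, y k) :
    ∃ z : α → ℝ, ∑ k, z k = v Finset.univ ∧ List.Lex (· < ·) (theta v z) (theta v x) := by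
  set D := Dset v x ψ
  have hsmall : ∀ᶠ δ in 𝓝 (0 : ℝ), ∀ S ∈ D, ∀ T ∈ univ.powerset.erase ∅ \ D,
      excess v (x + δ • y) T < excess v (x + δ • y) S := by
    simp only [eventually_all_finset]
    exact fun S hS T hT => eventually_excess_add_smul_lt v x y (excess_lt_of_mem_Dset v hS hT)
  obtain ⟨δ, hδsep, hδ⟩ :=
    (hsmall.filter_mono (nhdsWithin_le_nhds (s := Set.Ioi 0))).and self_mem_nhdsWithin |>.exists
  refine ⟨x + δ • y, by simp [sum_add_distrib, ← mul_sum, hx, hy], ?_⟩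
  refine lex_theta_of_excess_le_on_top v x _ D (filter_subset _ _)
    (fun _ hS _ hT => (excess_lt_of_mem_Dset v hS hT).le) (fun S hS T hT => (hδsep S hS T hT).le)
    (fun S hS => ?_) ⟨S₀, hS₀, ?_⟩
  · rw [excess_add_smul]
    exact sub_le_self _ (mul_nonneg hδ.le (hpos S hS))
  · rw [excess_add_smul]
    exact sub_lt_self _ (mul_pos hδ hS₀pos)

/-- if `x` fails Property I then `x` is not a lexicographic minimizer:
some pre-imputation `z` satisfies `θ(z) <_L θ(x)`. -/
theorem stmt7 {α : Type*} [Fintype α] [DecidableEq α] [Nonempty α]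
    (v : Finset α → ℝ) (hv : v ∅ = 0)
    (x : α → ℝ) (hx : ∑ k, x k = v Finset.univ)
    (ψ : ℝ) (hne : (Dset v x ψ).Nonempty)
    (y : α → ℝ) (hy : ∑ k, y k = 0)
    (hpos : ∀ S ∈ Dset v x ψ, 0 ≤ ∑ k ∈ S, y k)
    (S₀ : Finset α) (hS₀ : S₀ ∈ Dset v x ψ) (hS₀pos : 0 < ∑ k ∈ S₀, y k) :
    ∃ z : α → ℝ, ∑ k, z k = v Finset.univ ∧ List.Lex (· < ·) (theta v z) (theta v x) :=
  stmt7_general v x hx ψ y hy hpos S₀ hS₀ hS₀pos
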